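/- arXiv:2011.11875 — 2 statements merged into one kernel-verified Lean document; each statement's English description precedes it below -/
import Mathlib

section
/- Let p be an odd prime and N = 2p. Then G_p^2 ≡ (−1/p)·(p − (4^N − 1)/15) (mod 4^N − 1), where (−1/p) is the Legendre symbol of −1 modulo p. -/
/-- The quaternary cyclotomic sequence of period 2p from Kim et al.:
`a 0 = 0`, `a p = 2`; for odd `i ≠ p`, value `0`/`1` according to Legendre symbol `(i/p) = ±1`;
for even `i > 0`, value `2`/`3` according to `((i/2)/p) = ±1`. -/
def seqA (p : ℕ) [Fact p.Prime] (i : ℕ) : ℤ :=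
  if i = 0 then 0
  else if i = p then 2
  else if i % 2 = 1 then (if legendreSym p i = 1 then 0 else 1)
  else if legendreSym p (i / 2) = 1 then 2 else 3

/-- `S_A(4) = Σ_{i=0}^{2p-1} a(i)·4^i`. -/
def SA (p : ℕ) [Fact p.Prime] : ℤ := ∑ i ∈ Finset.range (2 * p), seqA p i * 4 ^ i

/-- The Gauss sum `G_p = Σ_{a=1}^{p-1} (a/p)·4^{2a}`. -/
def Gp (p : ℕ) [Fact p.Prime] : ℤ := ∑ a ∈ Finset.Icc 1 (p - 1), legendreSym p a * 4 ^ (2 * a)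

/-! With `ζ = 16 = 4²` in `R = ℤ/(4^N - 1)` we have `ζ^p = 1`, and `G_p` is the Gauss sum of the
quadratic character `χ` of `𝔽_p` against the additive character `a ↦ ζ^a`. This character is not
primitive (`ζ - 1 = 15` is a zero divisor), so the classical `G² = χ(-1) p` acquires a correction:
writing `G²` as `∑_t J(t) ψ(t)` with `J(t) = ∑_x χ(x) χ(t - x)`, one has `J(0) = χ(-1)(p - 1)` and
`J(t) = -χ(-1)` otherwise, whence `G² = χ(-1) (p - ∑_a ψ(a))` for every additive character `ψ`.
The values `J(t)` are computed in `ℤ`, a domain, and only then mapped to `R`.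
Finally `∑_a ζ^a = (4^N - 1)/15`. -/

open Finset

theorem MulChar.IsQuadratic.apply_mul_apply_self {F R : Type*} [Field F] [CommRing R]
    {χ : MulChar F R} (hχ : χ.IsQuadratic) {a : F} (ha : a ≠ 0) : χ a * χ a = 1 := by
  simpa [sq, MulChar.one_apply (Ne.isUnit ha)] using congrArg (· a) hχ.sq_eq_one

theorem MulChar.IsQuadratic.sum_mul_apply_sub {F R : Type*} [Field F] [Fintype F] [DecidableEq F]
    [CommRing R] [IsDomain R] {χ : MulChar F R} (hχ : χ.IsQuadratic) (hχ₁ : χ ≠ 1) (t : F) :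
    ∑ x, χ x * χ (t - x) = if t = 0 then χ (-1) * (Fintype.card F - 1) else -χ (-1) := by
  split_ifs with ht
  · have hsq : ∑ x, χ x * χ x = Fintype.card F - 1 := by
      have := congrArg (fun φ : MulChar F R ↦ ∑ x, φ x) hχ.sq_eq_one
      simp only [sq, MulChar.coeToFun_mul, Pi.mul_apply, MulChar.sum_one_eq_card_units,
        Fintype.card_units] at this
      rw [this, Nat.cast_sub Fintype.card_pos, Nat.cast_one]
    rw [← hsq, mul_sum]
    refine sum_congr rfl fun x _ ↦ ?_
    rw [ht, zero_sub, neg_eq_neg_one_mul x, map_mul]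
    ring
  · rw [← jacobiSum_nontrivial_inv hχ₁, hχ.inv, jacobiSum]
    refine (Fintype.sum_bijective _ (mulLeft_bijective₀ t ht) _ _ fun y ↦ ?_).symm
    rw [← mul_one_sub, map_mul, map_mul]
    linear_combination -(χ y * χ (1 - y)) * hχ.apply_mul_apply_self ht

theorem MulChar.IsQuadratic.gaussSum_ringHomComp_sq {F R R' : Type*} [Field F] [Fintype F]
    [CommRing R] [IsDomain R] [CommRing R'] {χ : MulChar F R} (hχ : χ.IsQuadratic) (hχ₁ : χ ≠ 1)
    (f : R →+* R') (ψ : AddChar F R') :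
    gaussSum (χ.ringHomComp f) ψ ^ 2 = f (χ (-1)) * (Fintype.card F - ∑ a, ψ a) := by
  classical
  have hJ (t : F) : ∑ x, χ.ringHomComp f x * χ.ringHomComp f (t - x) * ψ t =
      f (if t = 0 then χ (-1) * (Fintype.card F - 1) else -χ (-1)) * ψ t := by
    simp only [← hχ.sum_mul_apply_sub hχ₁, map_sum, map_mul, sum_mul, ringHomComp_apply]
  rw [sq, gaussSum_mul, Fintype.sum_congr _ _ hJ, Fintype.sum_eq_add_sum_compl 0,
    Fintype.sum_eq_add_sum_compl 0 ψ,
    sum_congr rfl fun t ht ↦ by rw [if_neg (mem_compl.mp ht ∘ mem_singleton.mpr)], ← mul_sum]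
  simp only [if_true, AddChar.map_zero_eq_one, map_mul, map_sub, map_neg, map_natCast, map_one]
  ring

theorem ZMod.sum_eq_sum_range {n : ℕ} [NeZero n] {M : Type*} [AddCommMonoid M]
    (f : ZMod n → M) : ∑ a, f a = ∑ i ∈ range n, f i :=
  sum_nbij' ZMod.val (↑) (by simp [ZMod.val_lt]) (by simp) (by simp)
    (fun _ h ↦ ZMod.val_cast_of_lt (mem_range.mp h)) (by simp)

theorem sq_sum_legendreSym_mul_pow {p : ℕ} [Fact p.Prime] (hp : p ≠ 2) {R : Type*} [CommRing R]
    {ζ : R} (hζ : ζ ^ p = 1) :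
    (∑ a ∈ range p, (legendreSym p a : R) * ζ ^ a) ^ 2 =
      legendreSym p (-1) * (p - ∑ a ∈ range p, ζ ^ a) := by
  have := (quadraticChar_isQuadratic (ZMod p)).gaussSum_ringHomComp_sq
    (quadraticChar_ne_one (by rwa [ZMod.ringChar_zmod_n])) (Int.castRingHom R)
    (AddChar.zmodChar p hζ)
  simpa [gaussSum, ZMod.sum_eq_sum_range, AddChar.zmodChar_apply', legendreSym, ZMod.card]
    using this

theorem Gp_eq_sum_range (p : ℕ) [Fact p.Prime] :
    Gp p = ∑ a ∈ range p, legendreSym p a * 16 ^ a := by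
  refine sum_subset_zero_on_sdiff ?_ ?_ fun a _ ↦ by rw [pow_mul]; norm_num
  · intro a
    simp only [mem_Icc, mem_range]
    omega
  · intro a ha
    obtain rfl : a = 0 := by
      simp only [mem_sdiff, mem_Icc, mem_range] at ha
      omega
    simp

/-- `G_p² ≡ (−1/p)·(p − (4^N−1)/15) (mod 4^N−1)` for `N = 2p`. -/
theorem stmt2 (p : ℕ) [Fact p.Prime] (hodd : Odd p) :
    Gp p ^ 2 ≡ (legendreSym p (-1)) * ((p : ℤ) - (4 ^ (2 * p) - 1) / 15)
      [ZMOD 4 ^ (2 * p) - 1] := by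
  have hp : p ≠ 2 := by
    rintro rfl
    exact absurd hodd (by decide)
  have h16 : (4 : ℤ) ^ (2 * p) = 16 ^ p := by rw [pow_mul]; norm_num
  have hgeom : ((4 : ℤ) ^ (2 * p) - 1) / 15 = ∑ i ∈ range p, 16 ^ i := by
    rw [h16, ← geom_sum_mul]
    norm_num
  obtain ⟨m, hm⟩ : ∃ m : ℕ, (4 : ℤ) ^ (2 * p) - 1 = m :=
    Int.eq_ofNat_of_zero_le (sub_nonneg.mpr (one_le_pow₀ (by norm_num)))
  have hζ : (16 : ZMod m) ^ p = 1 := by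
    have := congrArg (Int.cast : ℤ → ZMod m) hm
    push_cast [h16, ZMod.natCast_self] at this
    linear_combination this
  rw [hgeom, Gp_eq_sum_range, hm, ← ZMod.intCast_eq_intCast_iff]
  push_cast
  exact sq_sum_legendreSym_mul_pow hp hζ
end

section
/- Let p be an odd prime. Then d_+ := gcd(S_A(4), 4^p + 1) equals 5 if 5 divides p − 2, and equals 1 otherwise. -/
/-!
Pairing `a(2b) 4^(2b)` with `a(2b+1) 4^(2b+1)` writes `2 S_A(4)` as
`3·4^p - 5 + 9 Σ 16^b` plus two sums twisted by the Legendre symbol. Let `q ≠ 5` be a prime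
dividing `4^p + 1`. Then `-4` is a primitive `p`-th root of unity in `ZMod q`, `Σ 16^b = 0`,
and the twisted sums are the Gauss sums `G` and `χ(2) G` of the additive character
`x ↦ (-4)^x`; so `q ∣ S_A(4)` forces `(1 - χ(2)) G = 8`, i.e. `G = 4`, and `16 = G² = ±p` in
`ZMod q`. This is impossible once `p ≥ 17`, because `q ≡ 1 (mod 2p)` gives `q > p + 16`.
Modulo `5` every twisted sum collapses to a complete character sum and `2 S_A(4) ≡ 2 - p`,
while `25 ∤ 4^p + 1` since `4` has order `10` modulo `25`. Primes below `17` are checked by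
computation.
-/

open Finset

lemma sum_range_two_mul {M : Type*} [AddCommMonoid M] (n : ℕ) (f : ℕ → M) :
    ∑ i ∈ range (2 * n), f i = ∑ b ∈ range n, (f (2 * b) + f (2 * b + 1)) := by
  induction n with
  | zero => simp
  | succ n ih => rw [mul_add_one, sum_range_succ, sum_range_succ, sum_range_succ, ih, add_assoc]

lemma sum_range_natCast_zmod {n : ℕ} [NeZero n] {M : Type*} [AddCommMonoid M] (f : ZMod n → M) :
    ∑ b ∈ range n, f b = ∑ x : ZMod n, f x :=
  sum_nbij' (fun b => (b : ZMod n)) ZMod.val (fun _ _ => mem_univ _)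
    (fun x _ => mem_range.mpr (ZMod.val_lt x)) (fun _ hb => ZMod.val_cast_of_lt (mem_range.mp hb))
    (fun x _ => ZMod.natCast_zmod_val x) (fun _ _ => rfl)

lemma AddChar.mulShift_natCast_zmodChar {R : Type*} [CommMonoid R] {n : ℕ} [NeZero n] {y : R}
    (hy : y ^ n = 1) (a : ℕ) :
    (AddChar.zmodChar n hy).mulShift a =
      AddChar.zmodChar n (by rw [pow_right_comm, hy, one_pow] : (y ^ a) ^ n = 1) := by
  ext x
  rw [AddChar.mulShift_apply, ← ZMod.natCast_zmod_val x, ← Nat.cast_mul,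
    AddChar.zmodChar_apply', AddChar.zmodChar_apply', pow_mul]

lemma two_mul_add_one_le_of_isPrimitiveRoot {p q : ℕ} [Fact q.Prime] (hodd : Odd p) (hq : q ≠ 2)
    {y : ZMod q} (hy : IsPrimitiveRoot y p) : 2 * p + 1 ≤ q := by
  have hpq : p ∣ q - 1 :=
    hy.eq_orderOf ▸ ZMod.orderOf_dvd_card_sub_one (hy.ne_zero hodd.pos.ne')
  have h2q : 2 ∣ q - 1 := by
    have := Nat.odd_iff.mp ((Fact.out : q.Prime).odd_of_ne_two hq); omega
  have hq1 : 0 < q - 1 := by have := (Fact.out : q.Prime).two_le; omega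
  have := Nat.le_of_dvd hq1 ((Nat.coprime_two_left.mpr hodd).mul_dvd_of_dvd_of_dvd h2q hpq)
  omega

lemma not_twentyfive_dvd_four_pow_add_one {n : ℕ} (hn : ¬ 5 ∣ n) :
    ¬ (25 : ℤ) ∣ 4 ^ n + 1 := by
  rw [show (25 : ℤ) = ((25 : ℕ) : ℤ) from rfl, ← ZMod.intCast_zmod_eq_zero_iff_dvd]
  push_cast
  rw [pow_eq_pow_mod n (by decide : (4 : ZMod 25) ^ 10 = 1)]
  have hperiod : ∀ r < 10, r ≠ 0 → r ≠ 5 → (4 : ZMod 25) ^ r + 1 ≠ 0 := by decide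
  exact hperiod _ (Nat.mod_lt _ (by norm_num)) (by omega) (by omega)

lemma sixteen_ne_sign_mul_natCast {p q : ℕ} (hp : 17 ≤ p) (hq : 2 * p + 1 ≤ q) {ε : ZMod q}
    (hε : ε = 1 ∨ ε = -1) : (16 : ZMod q) ≠ ε * p := by
  rcases hε with rfl | rfl <;> intro h
  · have h16 : ((p : ℕ) : ZMod q) = ((16 : ℕ) : ZMod q) := by push_cast; linear_combination -h
    rw [ZMod.natCast_eq_natCast_iff', Nat.mod_eq_of_lt (by omega), Nat.mod_eq_of_lt (by omega)]
      at h16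
    omega
  · have h16 : ((p + 16 : ℕ) : ZMod q) = 0 := by push_cast; linear_combination h
    have := Nat.le_of_dvd (by omega) ((ZMod.natCast_eq_zero_iff _ _).mp h16)
    omega

lemma two_ne_zero_zmod {p : ℕ} [Fact p.Prime] (hp : p ≠ 2) : (2 : ZMod p) ≠ 0 := by
  rw [← Nat.cast_ofNat, Ne, ZMod.natCast_eq_zero_iff]
  exact fun h => hp ((Nat.prime_dvd_prime_iff_eq Fact.out Nat.prime_two).mp h)

section LegendreChar

variable (p : ℕ) [Fact p.Prime] (R : Type*) [CommRing R]

def legendreChar : MulChar (ZMod p) R :=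
  (quadraticChar (ZMod p)).ringHomComp (Int.castRingHom R)

variable {p R}

lemma legendreChar_apply (x : ZMod p) :
    legendreChar p R x = (quadraticChar (ZMod p) x : R) := rfl

lemma legendreChar_natCast (n : ℕ) : legendreChar p R n = (legendreSym p n : R) := by
  rw [legendreChar_apply, legendreSym, Int.cast_natCast]

lemma legendreChar_isQuadratic : (legendreChar p R).IsQuadratic :=
  (quadraticChar_isQuadratic (ZMod p)).comp _

lemma legendreChar_ne_one (hp : p ≠ 2) (h2 : (2 : R) ≠ 0) : legendreChar p R ≠ 1 := by
  obtain ⟨a, ha⟩ := FiniteField.exists_nonsquare (F := ZMod p) (by rwa [ZMod.ringChar_zmod_n])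
  have ha0 : a ≠ 0 := by rintro rfl; exact ha (IsSquare.zero)
  intro h
  have := congrArg (· a) h
  simp only [legendreChar_apply, quadraticChar_neg_one_iff_not_isSquare.mpr ha,
    MulChar.one_apply (isUnit_iff_ne_zero.mpr ha0), Int.cast_neg, Int.cast_one] at this
  exact h2 (by linear_combination -this)

lemma sum_range_legendreSym_mul_pow {y : R} (hy : y ^ p = 1) :
    ∑ b ∈ range p, (legendreSym p b : R) * y ^ b =
      gaussSum (legendreChar p R) (AddChar.zmodChar p hy) := by
  simp only [← legendreChar_natCast, ← AddChar.zmodChar_apply' hy]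
  exact sum_range_natCast_zmod fun x => legendreChar p R x * AddChar.zmodChar p hy x

lemma sum_range_legendreSym_two_mul_add_one_mul_pow (hp : p ≠ 2) {y : R} (hy : y ^ p = 1) :
    ∑ b ∈ range p, (legendreSym p (2 * b + 1) : R) * y ^ (2 * b + 1) =
      gaussSum (legendreChar p R) (AddChar.zmodChar p hy) := by
  let g := fun x => legendreChar p R x * AddChar.zmodChar p hy x
  calc _ = ∑ b ∈ range p, g (2 * b + 1) := by
        refine sum_congr rfl fun b _ => ?_
        rw [show (2 * b + 1 : ℤ) = ((2 * b + 1 : ℕ) : ℤ) by push_cast; rfl,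
          ← legendreChar_natCast, ← AddChar.zmodChar_apply' hy]
        push_cast; rfl
    _ = ∑ x : ZMod p, g (2 * x + 1) := sum_range_natCast_zmod fun x => g (2 * x + 1)
    _ = ∑ x : ZMod p, g x :=
        ((Equiv.mulLeft₀ 2 (two_ne_zero_zmod hp)).trans (Equiv.addRight 1)).sum_comp g

end LegendreChar

section

variable {p : ℕ} [Fact p.Prime]

lemma two_mul_seqA_two_mul (hodd : Odd p) {b : ℕ} (hb : b < p) :
    2 * seqA p (2 * b) = 5 - legendreSym p b - if b = 0 then 5 else 0 := by
  rcases eq_or_ne b 0 with rfl | hb0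
  · simp [seqA]
  have hp : 2 * b ≠ p := by rintro rfl; exact Nat.not_odd_iff_even.mpr (even_two_mul b) hodd
  have hbp : ((b : ℤ) : ZMod p) ≠ 0 := by
    rw [Int.cast_natCast, Ne, ZMod.natCast_eq_zero_iff]
    exact Nat.not_dvd_of_pos_of_lt (Nat.pos_of_ne_zero hb0) hb
  rcases legendreSym.eq_one_or_neg_one p hbp with h | h <;>
    simp [seqA, hb0, hp, Nat.mul_mod_right, h]

lemma two_mul_seqA_two_mul_add_one {b : ℕ} (hb : b < p) :
    2 * seqA p (2 * b + 1) = 1 - legendreSym p (2 * b + 1) + if 2 * b + 1 = p then 3 else 0 := by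
  rcases eq_or_ne (2 * b + 1) p with hp | hp
  · have hleg : legendreSym p (2 * b + 1) = 0 := by
      rw [legendreSym.eq_zero_iff]
      exact_mod_cast (ZMod.natCast_eq_zero_iff (2 * b + 1) p).mpr hp.symm.dvd
    simp [seqA, hp, hleg, (Fact.out : p.Prime).ne_zero]
  have hbp : ((2 * b + 1 : ℤ) : ZMod p) ≠ 0 := by
    rw [show (2 * b + 1 : ℤ) = ((2 * b + 1 : ℕ) : ℤ) by push_cast; rfl, Int.cast_natCast, Ne,
      ZMod.natCast_eq_zero_iff]
    exact fun hdvd => hp (Nat.eq_of_dvd_of_lt_two_mul (by omega) hdvd (by omega))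
  rcases legendreSym.eq_one_or_neg_one p hbp with h | h <;>
    simp [seqA, hp, Nat.add_mod, h]

lemma two_mul_seqA_pair (hodd : Odd p) {b : ℕ} (hb : b < p) :
    2 * (seqA p (2 * b) * 4 ^ (2 * b) + seqA p (2 * b + 1) * 4 ^ (2 * b + 1)) =
      9 * 16 ^ b + legendreSym p (2 * b + 1) * (-4) ^ (2 * b + 1) - legendreSym p b * 16 ^ b
        - (if b = 0 then 5 else 0) + (if b = p / 2 then 3 * 4 ^ p else 0) := by
  have h16 : (4 : ℤ) ^ (2 * b) = 16 ^ b := by rw [pow_mul]; norm_num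
  have hneg : (-4 : ℤ) ^ (2 * b + 1) = -4 ^ (2 * b + 1) := Odd.neg_pow ⟨b, rfl⟩ 4
  have hmid : (if 2 * b + 1 = p then (3 : ℤ) else 0) * 4 ^ (2 * b + 1) =
      if b = p / 2 then 3 * 4 ^ p else 0 := by
    obtain ⟨m, rfl⟩ := hodd
    by_cases hbm : b = m <;> simp [hbm, Nat.mul_add_div]
  calc _ = 2 * seqA p (2 * b) * 4 ^ (2 * b) + 2 * seqA p (2 * b + 1) * 4 ^ (2 * b + 1) := by ring
    _ = _ := by
      rw [two_mul_seqA_two_mul hodd hb, two_mul_seqA_two_mul_add_one hb, add_mul _ _ (_ ^ _), hmid,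
        hneg, pow_succ, h16]
      split_ifs with h0 <;> simp [h0] <;> ring

lemma two_mul_SA (hodd : Odd p) :
    2 * SA p = 3 * 4 ^ p - 5 + 9 * ∑ b ∈ range p, (16 : ℤ) ^ b
      + ∑ b ∈ range p, legendreSym p (2 * b + 1) * (-4) ^ (2 * b + 1)
      - ∑ b ∈ range p, legendreSym p b * 16 ^ b := by
  have hp0 : 0 < p := (Fact.out : p.Prime).pos
  have hpm : p / 2 < p := Nat.div_lt_self hp0 one_lt_two
  rw [SA, sum_range_two_mul, mul_sum,
    sum_congr rfl fun b hb => two_mul_seqA_pair hodd (mem_range.mp hb)]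
  simp only [sum_add_distrib, sum_sub_distrib, sum_ite_eq', mem_range, hp0, hpm, if_true,
    ← mul_sum]
  ring

lemma two_mul_intCast_SA (R : Type*) [CommRing R] (hodd : Odd p) :
    2 * (SA p : R) = 3 * 4 ^ p - 5 + 9 * ∑ b ∈ range p, (16 : R) ^ b
      + ∑ b ∈ range p, (legendreSym p (2 * b + 1) : R) * (-4) ^ (2 * b + 1)
      - ∑ b ∈ range p, (legendreSym p b : R) * 16 ^ b := by
  exact_mod_cast congrArg (Int.cast : ℤ → R) (two_mul_SA hodd)

lemma two_mul_intCast_SA_eq_gaussSum {R : Type*} [CommRing R] (hodd : Odd p)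
    (hy : (-4 : R) ^ p = 1) (hgeom : ∑ b ∈ range p, (16 : R) ^ b = 0) :
    2 * (SA p : R) = gaussSum (legendreChar p R) (AddChar.zmodChar p hy)
      - gaussSum (legendreChar p R) ((AddChar.zmodChar p hy).mulShift 2) - 8 := by
  have hp : p ≠ 2 := hodd.ne_two_of_dvd_nat dvd_rfl
  have h4 : (4 : R) ^ p = -1 := by rw [← neg_neg (4 : R), hodd.neg_pow, hy]
  rw [two_mul_intCast_SA R hodd, h4, hgeom, sum_range_legendreSym_two_mul_add_one_mul_pow hp hy,
    show (16 : R) = (-4) ^ 2 by norm_num, sum_range_legendreSym_mul_pow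
      (by rw [pow_right_comm, hy, one_pow] : ((-4 : R) ^ 2) ^ p = 1),
    ← Nat.cast_ofNat (R := ZMod p) (n := 2), AddChar.mulShift_natCast_zmodChar]
  ring

lemma gaussSum_eq_four_of_SA_eq_zero {F : Type*} [Field F] (hodd : Odd p)
    (hprim : IsPrimitiveRoot (-4 : F) p) (hS : (SA p : F) = 0) :
    gaussSum (legendreChar p F) (AddChar.zmodChar p hprim.pow_eq_one) = 4 := by
  have hp : p ≠ 2 := hodd.ne_two_of_dvd_nat dvd_rfl
  have h2 : (2 : F) ≠ 0 := fun h =>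
    hprim.ne_zero (Fact.out : p.Prime).ne_zero (by linear_combination -2 * h)
  have hgeom : ∑ b ∈ range p, (16 : F) ^ b = 0 := by
    rw [show (16 : F) = (-4) ^ 2 by norm_num]
    exact (hprim.pow_of_coprime 2 (Nat.coprime_two_left.mpr hodd)).geom_sum_eq_zero
      (Fact.out : p.Prime).one_lt
  have hid := two_mul_intCast_SA_eq_gaussSum hodd hprim.pow_eq_one hgeom
  have hu : IsUnit (2 : ZMod p) := isUnit_iff_ne_zero.mpr (two_ne_zero_zmod hp)
  have hshift :=
    gaussSum_mulShift (legendreChar p F) (AddChar.zmodChar p hprim.pow_eq_one) hu.unit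
  rw [hu.unit_spec] at hshift
  rw [hS] at hid
  rcases (legendreChar_isQuadratic 2).resolve_left (hu.map (legendreChar p F)).ne_zero
    with h | h <;> rw [h] at hshift
  · exact absurd (by linear_combination hid - hshift : (2 : F) ^ 3 = 0) (pow_ne_zero 3 h2)
  · exact mul_left_cancel₀ h2 (by linear_combination -hid - hshift)

lemma eq_five_of_dvd_SA_of_dvd (hodd : Odd p) (hp : 17 ≤ p) {q : ℕ} (hq : q.Prime)
    (hqS : (q : ℤ) ∣ SA p) (hqM : (q : ℤ) ∣ 4 ^ p + 1) : q = 5 := by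
  have hq2 : q ≠ 2 := by
    rintro rfl
    have h2 : (2 : ℤ) ∣ 4 ^ p := dvd_pow (by norm_num) (Fact.out : p.Prime).ne_zero
    exact absurd ((Int.dvd_add_right h2).mp hqM) (by norm_num)
  have := Fact.mk hq
  by_contra hq5
  have hS : (SA p : ZMod q) = 0 := (ZMod.intCast_zmod_eq_zero_iff_dvd _ _).mpr hqS
  have hM : ((4 ^ p + 1 : ℤ) : ZMod q) = 0 := (ZMod.intCast_zmod_eq_zero_iff_dvd _ _).mpr hqM
  push_cast at hM
  have hy : (-4 : ZMod q) ^ p = 1 := by rw [hodd.neg_pow]; linear_combination -hM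
  have hy1 : (-4 : ZMod q) ≠ 1 := by
    intro h
    have h5 : ((5 : ℕ) : ZMod q) = 0 := by push_cast; linear_combination -h
    exact hq5 ((Nat.prime_dvd_prime_iff_eq hq Nat.prime_five).mp
      ((ZMod.natCast_eq_zero_iff _ _).mp h5))
  have hprim : IsPrimitiveRoot (-4 : ZMod q) p :=
    IsPrimitiveRoot.iff_orderOf.mpr (orderOf_eq_prime hy hy1)
  have hsq := gaussSum_sq (χ := legendreChar p (ZMod q))
    (legendreChar_ne_one (hodd.ne_two_of_dvd_nat dvd_rfl) (two_ne_zero_zmod hq2))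
    legendreChar_isQuadratic (AddChar.zmodChar_primitive_of_primitive_root p hprim)
  rw [gaussSum_eq_four_of_SA_eq_zero hodd hprim hS, ZMod.card] at hsq
  have hu : IsUnit (-1 : ZMod p) := isUnit_one.neg
  exact sixteen_ne_sign_mul_natCast hp (two_mul_add_one_le_of_isPrimitiveRoot hodd hq2 hprim)
    ((legendreChar_isQuadratic (-1)).resolve_left (hu.map (legendreChar p (ZMod q))).ne_zero)
    (by linear_combination hsq)

lemma five_dvd_SA_iff (hodd : Odd p) : (5 : ℤ) ∣ SA p ↔ 5 ∣ p - 2 := by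
  have hp : p ≠ 2 := hodd.ne_two_of_dvd_nat dvd_rfl
  have hp2 := (Fact.out : p.Prime).two_le
  have hχ : gaussSum (legendreChar p (ZMod 5)) (AddChar.zmodChar p (one_pow p)) = 0 := by
    have : Fact (Nat.Prime 5) := ⟨Nat.prime_five⟩
    simp only [gaussSum, AddChar.zmodChar_apply, one_pow, mul_one]
    exact MulChar.sum_eq_zero_of_ne_one (legendreChar_ne_one hp (by decide))
  have hid := two_mul_intCast_SA (ZMod 5) hodd
  rw [show (16 : ZMod 5) = 1 by decide, show (-4 : ZMod 5) = 1 by decide,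
    show (4 : ZMod 5) = -1 by decide, hodd.neg_pow, sum_range_legendreSym_mul_pow (one_pow p),
    sum_range_legendreSym_two_mul_add_one_mul_pow hp (one_pow p), hχ] at hid
  simp only [one_pow, sum_const, card_range, nsmul_eq_mul, mul_one, add_zero, sub_zero] at hid
  have hmod5 : ∀ s x : ZMod 5, 2 * s = 3 * -1 - 5 + 9 * x → (s = 0 ↔ x = 2) := by decide
  rw [show (5 : ℤ) = ((5 : ℕ) : ℤ) from rfl, ← ZMod.intCast_zmod_eq_zero_iff_dvd,
    hmod5 _ _ hid, show (2 : ZMod 5) = ((2 : ℕ) : ZMod 5) by norm_num,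
    ZMod.natCast_eq_natCast_iff']
  omega

lemma gcd_SA_dvd_five (hodd : Odd p) : Int.gcd (SA p) (4 ^ p + 1) ∣ 5 := by
  rcases lt_or_ge p 17 with hp | hp
  · have hp2 := (Fact.out : p.Prime).two_le
    interval_cases p <;> first
      | exact absurd hodd (by decide)
      | (have h := ‹Fact (Nat.Prime _)›.out; norm_num at h; done)
      | (show Int.gcd (@SA _ ⟨by norm_num⟩) _ ∣ _; decide)
  set d := Int.gcd (SA p) (4 ^ p + 1)
  have hd : d = 5 ^ d.primeFactorsList.length :=
    Nat.eq_prime_pow_of_unique_prime_dvd (Int.gcd_ne_zero_right (by positivity)) fun hq hqd =>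
      eq_five_of_dvd_SA_of_dvd hodd hp hq ((Int.natCast_dvd_natCast.mpr hqd).trans
        (Int.gcd_dvd_left _ _)) ((Int.natCast_dvd_natCast.mpr hqd).trans (Int.gcd_dvd_right _ _))
  have h25 : ¬ 25 ∣ d := fun h => not_twentyfive_dvd_four_pow_add_one
    (fun h5 => by have := (Nat.prime_dvd_prime_iff_eq Nat.prime_five Fact.out).mp h5; omega)
    ((Int.natCast_dvd_natCast.mpr h).trans (Int.gcd_dvd_right _ _))
  rw [hd] at h25 ⊢
  exact pow_dvd_pow 5 (not_lt.mp fun h => h25 (pow_dvd_pow 5 h : 5 ^ 2 ∣ _))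

lemma five_dvd_gcd_SA_iff (hodd : Odd p) : 5 ∣ Int.gcd (SA p) (4 ^ p + 1) ↔ 5 ∣ p - 2 := by
  rw [← five_dvd_SA_iff hodd]
  refine ⟨fun h => (Int.natCast_dvd_natCast.mpr h).trans (Int.gcd_dvd_left _ _), fun h =>
    Int.dvd_gcd h (by simpa using hodd.add_dvd_pow_add_pow (4 : ℤ) 1)⟩

end

/-- `d₊ = gcd(S_A(4), 4^p + 1)` equals `5` if `5 ∣ p − 2` and `1` otherwise. -/
theorem stmt3 (p : ℕ) [Fact p.Prime] (hodd : Odd p) :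
    Int.gcd (SA p) (4 ^ p + 1) = if 5 ∣ p - 2 then 5 else 1 := by
  split_ifs with h
  · exact Nat.dvd_antisymm (gcd_SA_dvd_five hodd) ((five_dvd_gcd_SA_iff hodd).mpr h)
  · exact ((Nat.dvd_prime Nat.prime_five).mp (gcd_SA_dvd_five hodd)).resolve_right
      fun h5 => h ((five_dvd_gcd_SA_iff hodd).mp (h5 ▸ dvd_rfl))
end
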